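/- Every fractal is countably irreducible: if f is a fractal and f ≤_W ⊔_{i∈ℕ} g_i for a sequence of problems (g_i), then f ≤_W g_i for some i. -/

import Mathlib

open scoped Classical

/-! ## Basic notions of Weihrauch complexity -/

/-- The finite prefix of length `m` of a point of Baire space, as a list. -/
def pref (p : ℕ → ℕ) (m : ℕ) : List ℕ := List.ofFn (fun i : Fin m => p i)

/-- Type-2 computability of a partial function on Baire space, defined via monotone
computable word functions producing longer and longer prefixes of the output. -/
def BaireComputable (F : (ℕ → ℕ) →. (ℕ → ℕ)) : Prop :=
  ∃ ψ : List ℕ → List ℕ, Computable ψ ∧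
    (∀ u v : List ℕ, u <+: v → ψ u <+: ψ v) ∧
    ∀ p q, q ∈ F p → ∀ n, ∃ m, (ψ (pref p m))[n]? = some (q n)

/-- The interleaving pairing `⟨p,q⟩` on Baire space. -/
def pairB (p q : ℕ → ℕ) : ℕ → ℕ := fun n => if n % 2 = 0 then p (n / 2) else q (n / 2)

def evenPart (r : ℕ → ℕ) : ℕ → ℕ := fun n => r (2 * n)

def oddPart (r : ℕ → ℕ) : ℕ → ℕ := fun n => r (2 * n + 1)

/-- The `i`-th component of the countable tupling `⟨p₀,p₁,…⟩⟨i,k⟩ = pᵢ(k)`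
(using the Cantor pairing). -/
def proj (r : ℕ → ℕ) (i : ℕ) : ℕ → ℕ := fun k => r (Nat.pair i k)

/-- A represented space: a set `X` together with a surjective partial map
from Baire space onto `X`. -/
structure RepSp (X : Type*) where
  δ : (ℕ → ℕ) →. X
  surj : ∀ x : X, ∃ p, x ∈ δ p

theorem mem_part_mk {α : Type*} {D : Prop} {g : D → α} {a : α} (h : D) (e : g h = a) :
    a ∈ Part.mk D g := Part.mem_mk_iff.mpr ⟨h, e⟩

/-- The identity representation of Baire space. -/
def repBaire : RepSp (ℕ → ℕ) where
  δ := fun p => Part.some p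
  surj := fun p => ⟨p, Part.mem_some p⟩

/-- The standard representation of the natural numbers. -/
def repNat : RepSp ℕ where
  δ := fun p => Part.some (p 0)
  surj := fun n => ⟨fun _ => n, Part.mem_some n⟩

/-- `F` is a realizer of the problem `f :⊆ X ⇉ Y` (a problem is a multi-valued
function `f : X → Set Y`, whose domain is the set of `x` with `f x` nonempty). -/
def Realizes {X Y : Type*} (δX : RepSp X) (δY : RepSp Y)
    (f : X → Set Y) (F : (ℕ → ℕ) →. (ℕ → ℕ)) : Prop :=
  ∀ p x, x ∈ δX.δ p → (f x).Nonempty → ∃ q ∈ F p, ∃ y ∈ δY.δ q, y ∈ f x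

/-- Weihrauch reducibility: `f ≤_W g` iff there are computable `H, K` such that
`p ↦ H⟨p, G(K(p))⟩` realizes `f` whenever `G` realizes `g`. -/
def WRed {X Y Z W : Type*} (δX : RepSp X) (δY : RepSp Y) (δZ : RepSp Z) (δW : RepSp W)
    (f : X → Set Y) (g : Z → Set W) : Prop :=
  ∃ H K : (ℕ → ℕ) →. (ℕ → ℕ), BaireComputable H ∧ BaireComputable K ∧
    ∀ G : (ℕ → ℕ) →. (ℕ → ℕ), Realizes δZ δW g G →
      Realizes δX δY f
        (fun p => (K p).bind fun r => (G r).bind fun q => H (pairB p q))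

/-- Strong Weihrauch reducibility: `f ≤_sW g` iff there are computable `H, K`
such that `H ∘ G ∘ K` realizes `f` whenever `G` realizes `g`. -/
def SWRed {X Y Z W : Type*} (δX : RepSp X) (δY : RepSp Y) (δZ : RepSp Z) (δW : RepSp W)
    (f : X → Set Y) (g : Z → Set W) : Prop :=
  ∃ H K : (ℕ → ℕ) →. (ℕ → ℕ), BaireComputable H ∧ BaireComputable K ∧
    ∀ G : (ℕ → ℕ) →. (ℕ → ℕ), Realizes δZ δW g G →
      Realizes δX δY f (fun p => (K p).bind fun r => (G r).bind fun q => H q)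

/-- Weihrauch equivalence. -/
def WEquiv {X Y Z W : Type*} (δX : RepSp X) (δY : RepSp Y) (δZ : RepSp Z) (δW : RepSp W)
    (f : X → Set Y) (g : Z → Set W) : Prop :=
  WRed δX δY δZ δW f g ∧ WRed δZ δW δX δY g f

/-- Strong Weihrauch equivalence. -/
def SWEquiv {X Y Z W : Type*} (δX : RepSp X) (δY : RepSp Y) (δZ : RepSp Z) (δW : RepSp W)
    (f : X → Set Y) (g : Z → Set W) : Prop :=
  SWRed δX δY δZ δW f g ∧ SWRed δZ δW δX δY g f

/-- The identity problem on Baire space. -/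
def idProblem : (ℕ → ℕ) → Set (ℕ → ℕ) := fun p => {p}

/-! ## Constructions on representations and problems -/

/-- Representation of the product of two represented spaces. -/
def prodRep {X Z : Type*} (δX : RepSp X) (δZ : RepSp Z) : RepSp (X × Z) where
  δ := fun r => (δX.δ (evenPart r)).bind fun x => (δZ.δ (oddPart r)).map fun z => (x, z)
  surj := by
    intro xz
    obtain ⟨p, hp⟩ := δX.surj xz.1
    obtain ⟨q, hq⟩ := δZ.surj xz.2
    have he : evenPart (pairB p q) = p := by
      funext n
      have h1 : (2 * n) % 2 = 0 := by omega
      have h2 : (2 * n) / 2 = n := by omega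
      simp [evenPart, pairB, h1, h2]
    have ho : oddPart (pairB p q) = q := by
      funext n
      have h1 : ¬((2 * n + 1) % 2 = 0) := by omega
      have h2 : (2 * n + 1) / 2 = n := by omega
      simp [oddPart, pairB, h1, h2]
    refine ⟨pairB p q, Part.mem_bind_iff.mpr ⟨xz.1, by rw [he]; exact hp,
      (Part.mem_map_iff _).mpr ⟨xz.2, by rw [ho]; exact hq, rfl⟩⟩⟩

/-- The product `f × g` of two problems. -/
def prodProblem {X Y Z W : Type*} (f : X → Set Y) (g : Z → Set W) :
    X × Z → Set (Y × W) :=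
  fun xz => f xz.1 ×ˢ g xz.2

/-- Representation of the disjoint union of two represented spaces. -/
def sumRep {X Z : Type*} (δX : RepSp X) (δZ : RepSp Z) : RepSp (X ⊕ Z) where
  δ := fun r =>
    if r 0 = 0 then (δX.δ fun n => r (n + 1)).map Sum.inl
    else if r 0 = 1 then (δZ.δ fun n => r (n + 1)).map Sum.inr
    else Part.none
  surj := by
    rintro (x | z)
    · obtain ⟨p, hp⟩ := δX.surj x
      refine ⟨fun n => Nat.casesOn n 0 p, ?_⟩
      show Sum.inl x ∈ (δX.δ p).map Sum.inl
      exact (Part.mem_map_iff _).mpr ⟨x, hp, rfl⟩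
    · obtain ⟨p, hp⟩ := δZ.surj z
      refine ⟨fun n => Nat.casesOn n 1 p, ?_⟩
      show Sum.inr z ∈ (δZ.δ p).map Sum.inr
      exact (Part.mem_map_iff _).mpr ⟨z, hp, rfl⟩

/-- The coproduct `f ⊔ g` of two problems. -/
def coprodProblem {X Y Z W : Type*} (f : X → Set Y) (g : Z → Set W) :
    X ⊕ Z → Set (Y ⊕ W)
  | Sum.inl x => Sum.inl '' f x
  | Sum.inr z => Sum.inr '' g z

/-- The meet `f ⊓ g` of two problems. -/
def meetProblem {X Y Z W : Type*} (f : X → Set Y) (g : Z → Set W) :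
    X × Z → Set (Y ⊕ W) :=
  fun xz => Sum.inl '' f xz.1 ∪ Sum.inr '' g xz.2

/-- Representation of the space of sequences `X^ℕ` via the countable tupling. -/
noncomputable def seqRep {X : Type*} (δX : RepSp X) : RepSp (ℕ → X) where
  δ := fun r => Part.mk (∀ i : ℕ, ∃ x, x ∈ δX.δ (proj r i))
    (fun h i => Classical.choose (h i))
  surj := by
    intro x
    choose p hp using fun i => δX.surj (x i)
    refine ⟨fun m => p (Nat.unpair m).1 (Nat.unpair m).2, ?_⟩
    have hproj : ∀ i, proj (fun m => p (Nat.unpair m).1 (Nat.unpair m).2) i = p i := by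
      intro i; funext k; simp [proj]
    have hdom : ∀ i : ℕ, ∃ y, y ∈ δX.δ (proj (fun m => p (Nat.unpair m).1 (Nat.unpair m).2) i) :=
      fun i => ⟨x i, by rw [hproj i]; exact hp i⟩
    refine mem_part_mk hdom ?_
    funext i
    exact Part.mem_unique (Classical.choose_spec (hdom i)) (by rw [hproj i]; exact hp i)

/-- The parallelization `f̂` of a problem. -/
def parallelProblem {X Y : Type*} (f : X → Set Y) : (ℕ → X) → Set (ℕ → Y) :=
  fun x => {y | ∀ i, y i ∈ f (x i)}

/-- Representation of the finite power `Xⁿ` via the countable tupling. -/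
noncomputable def finProdRep (n : ℕ) {X : Type*} (δX : RepSp X) : RepSp (Fin n → X) where
  δ := fun r => Part.mk (∀ i : Fin n, ∃ x, x ∈ δX.δ (proj r i))
    (fun h i => Classical.choose (h i))
  surj := by
    intro x
    choose p hp using fun i => δX.surj (x i)
    classical
    refine ⟨fun m => if h : (Nat.unpair m).1 < n then p ⟨_, h⟩ (Nat.unpair m).2 else 0, ?_⟩
    have hproj : ∀ i : Fin n,
        proj (fun m => if h : (Nat.unpair m).1 < n then p ⟨_, h⟩ (Nat.unpair m).2 else 0) i
          = p i := by
      intro i; funext k; simp [proj, i.isLt]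
    have hdom : ∀ i : Fin n, ∃ y, y ∈ δX.δ
        (proj (fun m => if h : (Nat.unpair m).1 < n then p ⟨_, h⟩ (Nat.unpair m).2 else 0) i) :=
      fun i => ⟨x i, by rw [hproj i]; exact hp i⟩
    refine mem_part_mk hdom ?_
    funext i
    exact Part.mem_unique (Classical.choose_spec (hdom i)) (by rw [hproj i]; exact hp i)

/-- The `n`-fold product `fⁿ` of a problem with itself. -/
def finProdProblem (n : ℕ) {X Y : Type*} (f : X → Set Y) :
    (Fin n → X) → Set (Fin n → Y) :=
  fun x => {y | ∀ i, y i ∈ f (x i)}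

/-- Representation of the space `X*` of words over `X`. -/
noncomputable def starRep {X : Type*} (δX : RepSp X) : RepSp (Σ n : ℕ, Fin n → X) where
  δ := fun r => Part.mk (∀ i : Fin (r 0), ∃ x, x ∈ δX.δ (proj (fun m => r (m + 1)) i))
    (fun h => ⟨r 0, fun i => Classical.choose (h i)⟩)
  surj := by
    rintro ⟨n, x⟩
    choose p hp using fun i => δX.surj (x i)
    classical
    have hproj : ∀ i : Fin n,
        proj (fun m' => if h : (Nat.unpair m').1 < n then p ⟨_, h⟩ (Nat.unpair m').2 else 0) i
          = p i := by
      intro i; funext k; simp [proj, i.isLt]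
    have hdom : ∀ i : Fin n, ∃ y, y ∈ δX.δ
        (proj (fun m' => if h : (Nat.unpair m').1 < n then p ⟨_, h⟩ (Nat.unpair m').2 else 0) i) :=
      fun i => ⟨x i, by rw [hproj i]; exact hp i⟩
    refine ⟨fun m => Nat.casesOn m n
      (fun m' => if h : (Nat.unpair m').1 < n then p ⟨_, h⟩ (Nat.unpair m').2 else 0),
      Part.mem_mk_iff.mpr ⟨hdom, ?_⟩⟩
    have hx : (fun i : Fin n => Classical.choose (hdom i)) = x := funext fun i =>
      Part.mem_unique (Classical.choose_spec (hdom i)) (by rw [hproj i]; exact hp i)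
    exact congrArg (Sigma.mk n) hx

/-- The finite parallelization `f*` of a problem. -/
def starProblem {X Y : Type*} (f : X → Set Y) :
    (Σ n : ℕ, Fin n → X) → Set (Σ n : ℕ, Fin n → Y) :=
  fun x => {y | ∃ e : x.1 = y.1, ∀ i : Fin x.1, y.2 (Fin.cast e i) ∈ f (x.2 i)}

/-- Representation of a countable disjoint union of represented spaces. -/
def csumRep {Z : ℕ → Type*} (δZ : ∀ i, RepSp (Z i)) : RepSp (Σ i, Z i) where
  δ := fun r => ((δZ (r 0)).δ (fun n => r (n + 1))).map fun z => ⟨r 0, z⟩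
  surj := by
    rintro ⟨i, z⟩
    obtain ⟨p, hp⟩ := (δZ i).surj z
    exact ⟨fun n => Nat.casesOn n i p, (Part.mem_map_iff _).mpr ⟨z, hp, rfl⟩⟩

/-- The countable coproduct `⊔ᵢ gᵢ` of a sequence of problems. -/
def csumProblem {Z W : ℕ → Type*} (g : ∀ i, Z i → Set (W i)) :
    (Σ i, Z i) → Set (Σ i, W i) :=
  fun x => Sigma.mk x.1 '' g x.1 x.2

/-! ## Limits and jumps -/

/-- The limit map on Baire space, as a (single-valued) problem:
`lim⟨p₀,p₁,…⟩` is the pointwise limit of the sequence `(pₙ)ₙ`. -/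
def limProblem : (ℕ → ℕ) → Set (ℕ → ℕ) :=
  fun r => {q | ∀ n, ∃ N, ∀ m, N ≤ m → proj r m n = q n}

/-- The limit map on Baire space as a partial (single-valued) function. -/
noncomputable def limP : (ℕ → ℕ) →. (ℕ → ℕ) :=
  fun r => Part.mk (∀ n, ∃ N, ∀ m, N ≤ m → proj r m n = proj r N n)
    (fun h n => proj r (Classical.choose (h n)) n)

/-- The jump `(X′, δ′)` of a represented space: `δ′ := δ ∘ lim`. -/
noncomputable def jumpRep {X : Type*} (δ : RepSp X) : RepSp X where
  δ := fun p => (limP p).bind δ.δ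
  surj := by
    intro x
    obtain ⟨p, hp⟩ := δ.surj x
    refine ⟨fun m => p (Nat.unpair m).2, Part.mem_bind_iff.mpr ⟨p, ?_, hp⟩⟩
    have hproj : ∀ m, proj (fun m => p (Nat.unpair m).2) m = p := by
      intro m; funext k; simp [proj]
    have hdom : ∀ n, ∃ N, ∀ m, N ≤ m →
        proj (fun m => p (Nat.unpair m).2) m n = proj (fun m => p (Nat.unpair m).2) N n :=
      fun n => ⟨0, fun m _ => by rw [hproj m, hproj 0]⟩
    refine mem_part_mk hdom ?_
    funext n
    rw [hproj]

/-! ## Choice problems -/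

/-- The representation of subsets of `ℕ` by enumerations of their complements:
`p` is a name of `A` iff `p` enumerates (via `p m = n + 1`) exactly the `n ∉ A`. -/
def enumNegRep : RepSp (Set ℕ) where
  δ := fun p => Part.some {n | ∀ m, p m ≠ n + 1}
  surj := by
    intro S
    by_cases h : Sᶜ.Nonempty
    · obtain ⟨f, hf⟩ := (Set.to_countable Sᶜ).exists_eq_range h
      refine ⟨fun m => f m + 1, Part.mem_some_iff.mpr ?_⟩
      ext n
      simp only [Set.mem_setOf_eq]
      constructor
      · intro hn m hm
        have hfm : f m ∈ Sᶜ := by rw [hf]; exact ⟨m, rfl⟩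
        have hfmn : f m = n := by omega
        rw [hfmn] at hfm
        exact hfm hn
      · intro hn
        by_contra hS
        have hmem : n ∈ Sᶜ := hS
        rw [hf] at hmem
        obtain ⟨m, hm⟩ := hmem
        exact hn m (by omega)
    · refine ⟨fun _ => 0, Part.mem_some_iff.mpr ?_⟩
      have hS : S = Set.univ := by
        rw [← compl_compl S, Set.not_nonempty_iff_eq_empty.mp h, Set.compl_empty]
      rw [hS]
      ext n
      simp

/-- Choice on the natural numbers: given (a name of) a nonempty set `A ⊆ ℕ`,
find an element of `A`. -/
def CNat : Set ℕ → Set ℕ := fun A => A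

/-- Choice on the finite set `{0, …, k-1}`. -/
def CFin (k : ℕ) : Set ℕ → Set ℕ := fun A => {n | n ∈ A ∧ A ⊆ Set.Iio k}

/-- The limited principle of omniscience as a problem. -/
noncomputable def LPOProblem : (ℕ → ℕ) → Set ℕ :=
  fun p => {if ∃ k, p k = 0 then 1 else 0}


/-- Restriction of a problem on Baire space to a set `A`. -/
def restrictProblem (F : (ℕ → ℕ) → Set (ℕ → ℕ)) (A : Set (ℕ → ℕ)) :
    (ℕ → ℕ) → Set (ℕ → ℕ) :=
  fun p => {q | q ∈ F p ∧ p ∈ A}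

/-- A problem is a fractal if it has a representative on Baire space all of whose
restrictions to clopen sets meeting its domain are Weihrauch equivalent to it. -/
def Fractal {X Y : Type*} (δX : RepSp X) (δY : RepSp Y) (f : X → Set Y) : Prop :=
  ∃ F : (ℕ → ℕ) → Set (ℕ → ℕ),
    WEquiv repBaire repBaire δX δY F f ∧
    ∀ A : Set (ℕ → ℕ), IsClopen A → (A ∩ {p | (F p).Nonempty}).Nonempty →
      WEquiv repBaire repBaire repBaire repBaire (restrictProblem F A) F

/-- A problem `f` is densely realized if for every name `p` of an admissible instance
the set of names of solutions is dense in the domain of the output representation. -/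
def DenselyRealized {X Y : Type*} (δX : RepSp X) (δY : RepSp Y) (f : X → Set Y) : Prop :=
  ∀ p, ∀ x ∈ δX.δ p, (f x).Nonempty →
    {q : ℕ → ℕ | (δY.δ q).Dom} ⊆ closure {q : ℕ → ℕ | ∃ y ∈ δY.δ q, y ∈ f x}

/-- Turing reducibility on Baire space: `a` is computable from `b`. -/
def TRed (a b : ℕ → ℕ) : Prop := ∃ F, BaireComputable F ∧ a ∈ F b

/-- The two-point space `{p, q}` represented by the identity. -/
def pqRep (p q : ℕ → ℕ) : RepSp {r : ℕ → ℕ // r = p ∨ r = q} where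
  δ := fun r => Part.mk (r = p ∨ r = q) (fun h => ⟨r, h⟩)
  surj := fun x => ⟨x.1, Part.mem_mk_iff.mpr ⟨x.2, rfl⟩⟩

/-- The problem `m_A` associated with a set `A ⊆ ℕ`. -/
noncomputable def mProblem (p q : ℕ → ℕ) (A : Set ℕ) :
    ℕ → Set {r : ℕ → ℕ // r = p ∨ r = q} :=
  fun n => {y | y.1 = if n ∈ A then p else q}

/-- The join `A ⊕ B` of two sets of natural numbers. -/
def mJoin (A B : Set ℕ) : Set ℕ :=
  {k | (k % 2 = 0 ∧ k / 2 ∈ A) ∨ (k % 2 = 1 ∧ k / 2 ∈ B)}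

/-- The cardinality `#f` of a problem: the supremum of the cardinalities of sets
`M ⊆ dom f` whose images under `f` are pairwise disjoint. -/
noncomputable def problemCard {X Y : Type} (f : X → Set Y) : Cardinal :=
  sSup {c | ∃ M : Set X, (∀ x ∈ M, (f x).Nonempty) ∧ M.PairwiseDisjoint f ∧
    c = Cardinal.mk M}

/-- Computability of a problem: it has a computable realizer. -/
def ComputableProblem {X Y : Type*} (δX : RepSp X) (δY : RepSp Y) (f : X → Set Y) : Prop :=
  ∃ F, BaireComputable F ∧ Realizes δX δY f F

/-- The minimum function on Baire space. -/
def minProblem : (ℕ → ℕ) → Set ℕ :=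
  fun p => {n | n ∈ Set.range p ∧ ∀ m, n ≤ p m}

/-- The complementary minimum function `minᶜ`. -/
def mincProblem : (ℕ → ℕ) → Set ℕ :=
  fun p => {n | (∀ m, p m ≠ n) ∧ ∀ j, j < n → ∃ m, p m = j}

/-- The maximum function on Baire space (defined on bounded sequences). -/
def maxProblem : (ℕ → ℕ) → Set ℕ :=
  fun p => {n | n ∈ Set.range p ∧ ∀ m, p m ≤ n}

/-!
Let `F ≡_W f` be the representative witnessing that `f` is a fractal, and fix a reduction
`F ≤_W ⊔ᵢ gᵢ`. On a name `p₀ ∈ dom F` the preprocessing map outputs an index `i` of a summand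
after reading only a finite prefix of `p₀`, so on the clopen cylinder `A` of that prefix it
always asks `gᵢ`, whence `F|_A ≤_W gᵢ`. Fractality gives `f ≤_W F ≤_W F|_A ≤_W gᵢ`.
If `dom F` is empty, `F` reduces to every problem.
-/

theorem List.IsPrefix.getElem?_eq_some {α : Type*} {u v : List α} (h : u <+: v) {j : ℕ}
    {a : α} (hj : u[j]? = some a) : v[j]? = some a := by
  obtain ⟨t, rfl⟩ := h
  rwa [List.getElem?_append_left (List.getElem?_eq_some_iff.mp hj).1]

theorem List.IsPrefix.getD_eq {α : Type*} {u v : List α} (h : u <+: v) {j : ℕ}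
    (hj : j < u.length) (d : α) : v.getD j d = u.getD j d := by
  simp only [List.getD_eq_getElem?_getD, h.getElem?_eq_some (List.getElem?_eq_getElem hj),
    List.getElem?_eq_getElem hj]

theorem pref_length (p : ℕ → ℕ) (m : ℕ) : (pref p m).length = m := by
  simp [pref]

theorem pref_getElem? (p : ℕ → ℕ) {m j : ℕ} (h : j < m) : (pref p m)[j]? = some (p j) := by
  simp [pref, h]

theorem pref_getElem (p : ℕ → ℕ) {m j : ℕ} (h : j < (pref p m).length) :
    (pref p m)[j] = p j := by
  simp [pref]

theorem pref_getD (p : ℕ → ℕ) {m j : ℕ} (h : j < m) : (pref p m).getD j 0 = p j := by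
  rw [List.getD_eq_getElem?_getD, pref_getElem? p h, Option.getD_some]

theorem pref_prefix_pref (p : ℕ → ℕ) {m m' : ℕ} (h : m ≤ m') : pref p m <+: pref p m' :=
  List.prefix_iff_getElem?.mpr fun j hj => by
    rw [pref_length] at hj
    rw [pref_getElem? p (hj.trans_le h), pref_getElem]

theorem pref_eq_of_mem_cylinder {p p₀ : ℕ → ℕ} {m : ℕ} (h : p ∈ PiNat.cylinder p₀ m) :
    pref p m = pref p₀ m :=
  congrArg List.ofFn (funext fun j => h j j.2)

theorem PiNat.isClopen_cylinder {E : ℕ → Type*} [∀ n, TopologicalSpace (E n)]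
    [∀ n, DiscreteTopology (E n)] (x : ∀ n, E n) (n : ℕ) : IsClopen (cylinder x n) := by
  refine ⟨?_, isOpen_cylinder E x n⟩
  rw [cylinder_eq_pi]
  exact isClosed_set_pi fun i _ => isClosed_discrete _

def PrefixMono (ψ : List ℕ → List ℕ) : Prop := ∀ u v : List ℕ, u <+: v → ψ u <+: ψ v

def ConvergesAlong (ψ : List ℕ → List ℕ) (p q : ℕ → ℕ) : Prop :=
  ∀ n, ∃ m, (ψ (pref p m))[n]? = some (q n)

namespace ConvergesAlong

variable {ψ : List ℕ → List ℕ} {p q : ℕ → ℕ}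

theorem eq_of_getElem? (hm : PrefixMono ψ) (hl : ConvergesAlong ψ p q) {m j a : ℕ}
    (h : (ψ (pref p m))[j]? = some a) : a = q j := by
  obtain ⟨m', hm'⟩ := hl j
  rcases le_total m m' with hle | hle
  · rw [(hm _ _ (pref_prefix_pref p hle)).getElem?_eq_some h] at hm'
    exact Option.some.inj hm'
  · rw [(hm _ _ (pref_prefix_pref p hle)).getElem?_eq_some hm'] at h
    exact (Option.some.inj h).symm

theorem exists_pref_prefix (hm : PrefixMono ψ) (hl : ConvergesAlong ψ p q) (N : ℕ) :
    ∃ m, pref q N <+: ψ (pref p m) := by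
  rcases N.eq_zero_or_pos with rfl | hN
  · exact ⟨0, by simp [pref]⟩
  obtain ⟨m, hmN⟩ := hl (N - 1)
  have hlen : N ≤ (ψ (pref p m)).length := by
    have := (List.getElem?_eq_some_iff.mp hmN).1
    omega
  refine ⟨m, List.prefix_iff_getElem?.mpr fun j hj => ?_⟩
  rw [pref_length] at hj
  rw [List.getElem?_eq_getElem (hj.trans_le hlen), pref_getElem, Option.some_inj]
  exact hl.eq_of_getElem? hm (List.getElem?_eq_getElem (hj.trans_le hlen))

theorem comp {ψ' : List ℕ → List ℕ} {t : ℕ → ℕ} (hm : PrefixMono ψ) (hl : ConvergesAlong ψ p q)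
    (hm' : PrefixMono ψ') (hl' : ConvergesAlong ψ' q t) :
    ConvergesAlong (fun u => ψ' (ψ u)) p t := by
  intro n
  obtain ⟨m', h'⟩ := hl' n
  obtain ⟨m, hmm'⟩ := hl.exists_pref_prefix hm m'
  exact ⟨m, (hm' _ _ hmm').getElem?_eq_some h'⟩

end ConvergesAlong

/-- The word-level counterpart of `pairB`, cut off where either argument runs out. -/
def listPair (a b : List ℕ) : List ℕ :=
  (List.range (min (2 * a.length) (2 * b.length + 1))).map
    fun k => if k % 2 = 0 then a.getD (k / 2) 0 else b.getD (k / 2) 0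

theorem List.getElem?_map_range {α : Type*} (L : ℕ) (f : ℕ → α) (j : ℕ) :
    ((List.range L).map f)[j]? = if j < L then some (f j) else none := by
  split_ifs with h
  · rw [List.getElem?_map, List.getElem?_range h, Option.map_some]
  · exact List.getElem?_eq_none (by simpa using h)

theorem listPair_mono {a a' b b' : List ℕ} (ha : a <+: a') (hb : b <+: b') :
    listPair a b <+: listPair a' b' := by
  have hla := ha.length_le
  have hlb := hb.length_le
  refine List.prefix_iff_getElem?.mpr fun j hj => ?_
  rw [← List.getElem?_eq_getElem hj]
  simp only [listPair, List.length_map, List.length_range] at hj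
  rw [listPair, listPair, List.getElem?_map_range, List.getElem?_map_range, if_pos hj,
    if_pos (by omega)]
  split_ifs with h2
  · rw [ha.getD_eq (by omega)]
  · rw [hb.getD_eq (by omega)]

theorem primrec₂_listPair : Primrec₂ listPair := by
  have hlen : Primrec fun ab : List ℕ × List ℕ => min (2 * ab.1.length) (2 * ab.2.length + 1) :=
    Primrec.nat_min.comp (Primrec.nat_double.comp (Primrec.list_length.comp Primrec.fst))
      (Primrec.nat_double_succ.comp (Primrec.list_length.comp Primrec.snd))
  have hhalf : Primrec fun x : (List ℕ × List ℕ) × ℕ => x.2 / 2 :=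
    Primrec.nat_div.comp Primrec.snd (Primrec.const 2)
  have hgetD {l : List ℕ × List ℕ → List ℕ} (hl : Primrec l) :
      Primrec fun x : (List ℕ × List ℕ) × ℕ => (l x.1).getD (x.2 / 2) 0 :=
    (Primrec.option_getD.comp (Primrec.list_getElem?.comp (hl.comp Primrec.fst) hhalf)
      (Primrec.const 0)).of_eq fun _ => List.getD_eq_getElem?_getD.symm
  refine Primrec.list_map (Primrec.list_range.comp hlen) (Primrec.ite ?_ (hgetD Primrec.fst)
    (hgetD Primrec.snd))
  exact Primrec.eq.comp (Primrec.nat_mod.comp Primrec.snd (Primrec.const 2)) (Primrec.const 0)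

theorem ConvergesAlong.listPair {ψa ψb : List ℕ → List ℕ} {p qa qb : ℕ → ℕ}
    (ha : PrefixMono ψa) (hb : PrefixMono ψb) (la : ConvergesAlong ψa p qa)
    (lb : ConvergesAlong ψb p qb) :
    ConvergesAlong (fun u => listPair (ψa u) (ψb u)) p (pairB qa qb) := by
  intro n
  obtain ⟨m₁, h₁⟩ := la.exists_pref_prefix ha (n + 1)
  obtain ⟨m₂, h₂⟩ := lb.exists_pref_prefix hb (n + 1)
  have ha' := h₁.trans (ha _ _ (pref_prefix_pref p (le_max_left m₁ m₂)))
  have hb' := h₂.trans (hb _ _ (pref_prefix_pref p (le_max_right m₁ m₂)))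
  have hla := ha'.length_le
  have hlb := hb'.length_le
  rw [pref_length] at hla hlb
  refine ⟨max m₁ m₂, ?_⟩
  beta_reduce
  rw [_root_.listPair, List.getElem?_map_range, if_pos (by omega)]
  by_cases h2 : n % 2 = 0
  · rw [if_pos h2, ha'.getD_eq (by rw [pref_length]; omega), pref_getD qa (by omega)]
    simp [pairB, h2]
  · rw [if_neg h2, hb'.getD_eq (by rw [pref_length]; omega), pref_getD qb (by omega)]
    simp [pairB, h2]

def seqCons (i : ℕ) (q : ℕ → ℕ) : ℕ → ℕ := fun n => Nat.casesOn n i q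

def seqTail (r : ℕ → ℕ) : ℕ → ℕ := fun n => r (n + 1)

theorem evenPart_pairB (p q : ℕ → ℕ) : evenPart (pairB p q) = p := by
  funext n
  simp [evenPart, pairB]

theorem oddPart_pairB (p q : ℕ → ℕ) : oddPart (pairB p q) = q := by
  funext n
  simp [oddPart, pairB, Nat.add_mod, Nat.add_div]

def reindexWord (σ len : ℕ → ℕ) (u : List ℕ) : List ℕ :=
  (List.range (len u.length)).map fun i => u.getD (σ i) 0

namespace BaireComputable

theorem of_subset {F G : (ℕ → ℕ) →. (ℕ → ℕ)} (hF : BaireComputable F)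
    (hGF : ∀ p q, q ∈ G p → q ∈ F p) : BaireComputable G := by
  obtain ⟨ψ, hc, hm, hl⟩ := hF
  exact ⟨ψ, hc, hm, fun p q hq => hl p q (hGF p q hq)⟩

theorem comp {F G : (ℕ → ℕ) →. (ℕ → ℕ)} (hG : BaireComputable G) (hF : BaireComputable F) :
    BaireComputable fun p => (F p).bind G := by
  obtain ⟨ψ, hc, hm, hl⟩ := hF
  obtain ⟨ψ', hc', hm', hl'⟩ := hG
  refine ⟨fun u => ψ' (ψ u), hc'.comp hc, fun u v h => hm' _ _ (hm u v h), fun p q hq => ?_⟩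
  obtain ⟨r, hr, hq⟩ := Part.mem_bind_iff.mp hq
  exact ConvergesAlong.comp hm (hl p r hr) hm' (hl' r q hq)

theorem pair {A B : (ℕ → ℕ) →. (ℕ → ℕ)} (hA : BaireComputable A) (hB : BaireComputable B) :
    BaireComputable fun p => (A p).bind fun a => (B p).map (pairB a) := by
  obtain ⟨ψa, hca, hma, hla⟩ := hA
  obtain ⟨ψb, hcb, hmb, hlb⟩ := hB
  refine ⟨fun u => listPair (ψa u) (ψb u), primrec₂_listPair.to_comp.comp hca hcb,
    fun u v h => listPair_mono (hma u v h) (hmb u v h), fun p q hq => ?_⟩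
  obtain ⟨a, ha, hq⟩ := Part.mem_bind_iff.mp hq
  obtain ⟨b, hb, rfl⟩ := (Part.mem_map_iff _).mp hq
  exact ConvergesAlong.listPair hma hmb (hla p a ha) (hlb p b hb)

theorem reindex {σ len : ℕ → ℕ} (hσ : Primrec σ) (hlen : Primrec len)
    (hσlen : ∀ L i, i < len L ↔ σ i < L) :
    BaireComputable fun p => Part.some fun n => p (σ n) := by
  have hmono : Monotone len := fun L L' hLL' => not_lt.mp fun h =>
    lt_irrefl _ ((hσlen L' _).mpr (((hσlen L _).mp h).trans_le hLL'))
  refine ⟨reindexWord σ len, ?_, fun u v h => ?_, fun p q hq n => ?_⟩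
  · refine Primrec.to_comp (Primrec.list_map (Primrec.list_range.comp
      (hlen.comp Primrec.list_length)) ?_)
    exact (Primrec.option_getD.comp (Primrec.list_getElem?.comp Primrec.fst
      (hσ.comp Primrec.snd)) (Primrec.const 0)).of_eq fun _ => List.getD_eq_getElem?_getD.symm
  · refine List.prefix_iff_getElem?.mpr fun j hj => ?_
    rw [← List.getElem?_eq_getElem hj]
    simp only [reindexWord, List.length_map, List.length_range] at hj
    rw [reindexWord, reindexWord, List.getElem?_map_range, List.getElem?_map_range, if_pos hj,
      if_pos (hj.trans_le (hmono h.length_le)), h.getD_eq ((hσlen _ _).mp hj)]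
  · obtain rfl := Part.mem_some_iff.mp hq
    refine ⟨σ n + 1, ?_⟩
    rw [reindexWord, List.getElem?_map_range, pref_length,
      if_pos ((hσlen _ _).mpr (Nat.lt_succ_self _)), pref_getD p (Nat.lt_succ_self _)]

theorem some_id : BaireComputable fun p => Part.some p :=
  reindex (σ := id) (len := id) Primrec.id Primrec.id fun _ _ => Iff.rfl

theorem some_evenPart : BaireComputable fun p => Part.some (evenPart p) :=
  reindex (len := fun L => (L + 1) / 2) Primrec.nat_double
    (Primrec.nat_div.comp Primrec.succ (Primrec.const 2)) fun _ _ => by omega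

theorem some_oddPart : BaireComputable fun p => Part.some (oddPart p) :=
  reindex (len := fun L => L / 2) Primrec.nat_double_succ
    (Primrec.nat_div.comp Primrec.id (Primrec.const 2)) fun _ _ => by omega

theorem some_seqTail : BaireComputable fun p => Part.some (seqTail p) :=
  reindex (len := fun L => L - 1) Primrec.succ
    (Primrec.nat_sub.comp Primrec.id (Primrec.const 1)) fun _ _ => by omega

theorem some_seqCons (i : ℕ) : BaireComputable fun p => Part.some (seqCons i p) := by
  refine ⟨fun u => i :: u, (Primrec.list_cons.comp (Primrec.const i) Primrec.id).to_comp,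
    fun u v h => List.cons_prefix_cons.mpr ⟨rfl, h⟩, fun p q hq n => ?_⟩
  obtain rfl := Part.mem_some_iff.mp hq
  cases n with
  | zero => exact ⟨0, rfl⟩
  | succ k => exact ⟨k + 1, by simpa [seqCons] using pref_getElem? p (Nat.lt_succ_self k)⟩

theorem exists_cylinder_apply_eq {K : (ℕ → ℕ) →. (ℕ → ℕ)} (hK : BaireComputable K)
    {p₀ r₀ : ℕ → ℕ} (hr₀ : r₀ ∈ K p₀) (n : ℕ) :
    ∃ m, ∀ p ∈ PiNat.cylinder p₀ m, ∀ r ∈ K p, r n = r₀ n := by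
  obtain ⟨ψ, -, hm, hl⟩ := hK
  obtain ⟨m, hmn⟩ := hl p₀ r₀ hr₀ n
  refine ⟨m, fun p hp r hr => ?_⟩
  rw [← pref_eq_of_mem_cylinder hp] at hmn
  exact (ConvergesAlong.eq_of_getElem? hm (hl p r hr) hmn).symm

end BaireComputable

theorem Realizes.exists {X Y : Type*} (δX : RepSp X) (δY : RepSp Y) (f : X → Set Y) :
    ∃ F : (ℕ → ℕ) →. (ℕ → ℕ), Realizes δX δY f F := by
  choose F hF using fun p x (hx : x ∈ δX.δ p) (hne : (f x).Nonempty) =>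
    let ⟨y, hy⟩ := hne
    let ⟨q, hq⟩ := δY.surj y
    (⟨q, y, hq, hy⟩ : ∃ q, ∃ y ∈ δY.δ q, y ∈ f x)
  refine ⟨fun p => Part.mk (∃ x, ∃ hx : x ∈ δX.δ p, (f x).Nonempty)
    fun h => F p h.choose h.choose_spec.1 h.choose_spec.2, fun p x hx hne => ?_⟩
  have h : ∃ x, ∃ hx : x ∈ δX.δ p, (f x).Nonempty := ⟨x, hx, hne⟩
  obtain rfl : h.choose = x := Part.mem_unique h.choose_spec.1 hx
  exact ⟨_, ⟨h, rfl⟩, hF p _ h.choose_spec.1 h.choose_spec.2⟩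

theorem Realizes.csumProblem {Z W : ℕ → Type*} {δZ : ∀ i, RepSp (Z i)} {δW : ∀ i, RepSp (W i)}
    {g : ∀ i, Z i → Set (W i)} {G : ℕ → (ℕ → ℕ) →. (ℕ → ℕ)}
    (hG : ∀ i, Realizes (δZ i) (δW i) (g i) (G i)) :
    Realizes (csumRep δZ) (csumRep δW) (csumProblem g)
      fun r => (G (r 0) (seqTail r)).map (seqCons (r 0)) := by
  intro r z hz hne
  obtain ⟨z₀, hz₀, rfl⟩ := (Part.mem_map_iff _).mp hz
  obtain ⟨q, hq, y, hy, hyg⟩ := hG (r 0) _ z₀ hz₀ (Set.image_nonempty.mp hne)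
  exact ⟨seqCons (r 0) q, (Part.mem_map_iff _).mpr ⟨q, hq, rfl⟩, ⟨r 0, y⟩,
    (Part.mem_map_iff _).mpr ⟨y, hy, rfl⟩, y, hyg, rfl⟩

namespace WRed

section

variable {X Y Z W U V : Type*} {δX : RepSp X} {δY : RepSp Y} {δZ : RepSp Z} {δW : RepSp W}
  {δU : RepSp U} {δV : RepSp V} {f : X → Set Y} {g : Z → Set W} {h : U → Set V}

theorem trans (hfg : WRed δX δY δZ δW f g) (hgh : WRed δZ δW δU δV g h) :
    WRed δX δY δU δV f h := by
  obtain ⟨H₁, K₁, hH₁, hK₁, hfg⟩ := hfg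
  obtain ⟨H₂, K₂, hH₂, hK₂, hgh⟩ := hgh
  refine ⟨fun s => (K₁ (evenPart s)).bind fun r =>
      (H₂ (pairB r (oddPart s))).bind fun t => H₁ (pairB (evenPart s) t),
    fun p => (K₁ p).bind K₂, ?_, hK₂.comp hK₁, fun G hG p x hx hne => ?_⟩
  · refine (hH₁.comp (BaireComputable.some_evenPart.pair (hH₂.comp
      ((hK₁.comp BaireComputable.some_evenPart).pair BaireComputable.some_oddPart)))).of_subset
      fun s q hq => ?_
    obtain ⟨r, hr, t, ht, hq⟩ := by simpa only [Part.mem_bind_iff] using hq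
    exact Part.mem_bind (Part.mem_bind (Part.mem_some _) (Part.mem_map _ (Part.mem_bind
      (Part.mem_bind (Part.mem_bind (Part.mem_some _) hr) (Part.mem_map _ (Part.mem_some _)))
      ht))) hq
  · obtain ⟨q, hq, y, hy, hyf⟩ := hfg _ (hgh G hG) p x hx hne
    refine ⟨q, ?_, y, hy, hyf⟩
    simp only [Part.mem_bind_iff, evenPart_pairB, oddPart_pairB] at hq ⊢
    obtain ⟨r, hr, t, ⟨s, hs, q₁, hq₁, ht⟩, hq⟩ := hq
    exact ⟨s, Part.mem_bind hr hs, q₁, hq₁, r, hr, t, ht, hq⟩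

theorem of_forall_eq_empty (hf : ∀ x, f x = ∅) : WRed δX δY δZ δW f g :=
  ⟨_, _, BaireComputable.some_id, BaireComputable.some_id,
    fun _ _ _ x _ hne => absurd (hf x) hne.ne_empty⟩

end

section

variable {F : (ℕ → ℕ) → Set (ℕ → ℕ)} {Z W : ℕ → Type*} {δZ : ∀ i, RepSp (Z i)}
  {δW : ∀ i, RepSp (W i)} {g : ∀ i, Z i → Set (W i)}

theorem restrictProblem_of_forall_apply_zero_eq {H K : (ℕ → ℕ) →. (ℕ → ℕ)}
    (hH : BaireComputable H) (hK : BaireComputable K)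
    (hHK : ∀ G, Realizes (csumRep δZ) (csumRep δW) (csumProblem g) G →
      Realizes repBaire repBaire F fun p => (K p).bind fun r => (G r).bind fun q => H (pairB p q))
    {A : Set (ℕ → ℕ)} {i : ℕ} (hA : ∀ p ∈ A, ∀ r ∈ K p, r 0 = i) :
    WRed repBaire repBaire (δZ i) (δW i) (restrictProblem F A) (g i) := by
  refine ⟨fun s => H (pairB (evenPart s) (seqCons i (oddPart s))),
    fun p => (K p).bind fun r => Part.some (seqTail r), ?_,
    BaireComputable.some_seqTail.comp hK, fun Gᵢ hGᵢ p x hx hne => ?_⟩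
  · refine (hH.comp (BaireComputable.some_evenPart.pair
      ((BaireComputable.some_seqCons i).comp BaireComputable.some_oddPart))).of_subset
      fun s q hq => Part.mem_bind (Part.mem_bind (Part.mem_some _)
        (Part.mem_map _ (Part.mem_bind (Part.mem_some _) (Part.mem_some _)))) hq
  obtain rfl : p = x := (Part.mem_some_iff.mp hx).symm
  obtain ⟨q₀, hq₀, hpA⟩ := hne
  choose G hG using fun j => Realizes.exists (δZ j) (δW j) (g j)
  have hG' : ∀ j, Realizes (δZ j) (δW j) (g j) (Function.update G i Gᵢ j) := by
    intro j
    rcases eq_or_ne j i with rfl | hji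
    · rwa [Function.update_self]
    · rw [Function.update_of_ne hji]
      exact hG j
  obtain ⟨q, hq, y, hy, hyF⟩ :=
    hHK _ (Realizes.csumProblem hG') p p (Part.mem_some _) ⟨q₀, hq₀⟩
  obtain rfl : q = y := (Part.mem_some_iff.mp hy).symm
  obtain ⟨r, hr, q₁, hq₁, hq⟩ := by simpa only [Part.mem_bind_iff] using hq
  rw [hA p hpA r hr, Function.update_self] at hq₁
  obtain ⟨q', hq', rfl⟩ := (Part.mem_map_iff _).mp hq₁
  refine ⟨q, Part.mem_bind (Part.mem_bind hr (Part.mem_some _)) (Part.mem_bind hq' ?_),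
    q, Part.mem_some _, hyF, hpA⟩
  beta_reduce
  rwa [evenPart_pairB, oddPart_pairB]

theorem exists_isClopen_restrictProblem
    (hF : WRed repBaire repBaire (csumRep δZ) (csumRep δW) F (csumProblem g))
    {p₀ : ℕ → ℕ} (hp₀ : (F p₀).Nonempty) :
    ∃ i, ∃ A : Set (ℕ → ℕ), IsClopen A ∧ p₀ ∈ A ∧
      WRed repBaire repBaire (δZ i) (δW i) (restrictProblem F A) (g i) := by
  obtain ⟨H, K, hH, hK, hHK⟩ := hF
  obtain ⟨G, hG⟩ := Realizes.exists (csumRep δZ) (csumRep δW) (csumProblem g)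
  obtain ⟨q, hq, -⟩ := hHK G hG p₀ p₀ (Part.mem_some _) hp₀
  obtain ⟨r₀, hr₀, -⟩ := Part.mem_bind_iff.mp hq
  obtain ⟨m, hm⟩ := hK.exists_cylinder_apply_eq hr₀ 0
  exact ⟨r₀ 0, PiNat.cylinder p₀ m, PiNat.isClopen_cylinder p₀ m, PiNat.self_mem_cylinder p₀ m,
    restrictProblem_of_forall_apply_zero_eq hH hK hHK hm⟩

end

end WRed

/-- every fractal is countably irreducible. -/
theorem fractal_countably_irreducible (X Y : Type) (δX : RepSp X) (δY : RepSp Y)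
    (f : X → Set Y) (hf : Fractal δX δY f)
    (Z W : ℕ → Type) (δZ : ∀ i, RepSp (Z i)) (δW : ∀ i, RepSp (W i))
    (g : ∀ i, Z i → Set (W i))
    (h : WRed δX δY (csumRep δZ) (csumRep δW) f (csumProblem g)) :
    ∃ i, WRed δX δY (δZ i) (δW i) f (g i) := by
  obtain ⟨F, ⟨hFf, hfF⟩, hfractal⟩ := hf
  by_cases hdom : ∃ p, (F p).Nonempty
  · obtain ⟨p₀, hp₀⟩ := hdom
    obtain ⟨i, A, hA, hp₀A, hAi⟩ := (hFf.trans h).exists_isClopen_restrictProblem hp₀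
    exact ⟨i, hfF.trans ((hfractal A hA ⟨p₀, hp₀A, hp₀⟩).2.trans hAi)⟩
  · simp only [not_exists, Set.not_nonempty_iff_eq_empty] at hdom
    exact ⟨0, hfF.trans (WRed.of_forall_eq_empty hdom)⟩
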